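/- arXiv:2008.11253 — 4 statements merged into one kernel-verified Lean document; each statement's English description precedes it below -/
import Mathlib

section
/- For every integer n ≥ 2, the polynomial x^n + x + 1 over F_2 is squarefree (has no repeated irreducible factors). -/
/-! In characteristic two, `f = X ^ n + X + 1` has derivative `n X ^ (n - 1) + 1`. For even `n`
this is `1`; for odd `n` it is `X ^ (n - 1) + 1`, and `f + X f' = 1`. Either way `f` is coprime to
its derivative, i.e. separable, hence squarefree. -/

open Polynomial

theorem Polynomial.separable_X_pow_add_X_add_one {R : Type*} [CommRing R] [CharP R 2] (n : ℕ) :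
    Separable (X ^ n + X + 1 : R[X]) := by
  rw [separable_def]
  obtain ⟨k, rfl | rfl⟩ := n.even_or_odd'
  · have hderiv : derivative (X ^ (2 * k) + X + 1 : R[X]) = 1 := by
      simp only [derivative_add, derivative_X_pow, derivative_X, derivative_one, add_zero]
      rw [Nat.cast_mul, Nat.cast_two, CharTwo.two_eq_zero]
      simp
    rw [hderiv]
    exact isCoprime_one_right
  · have hderiv : derivative (X ^ (2 * k + 1) + X + 1 : R[X]) = X ^ (2 * k) + 1 := by
      simp only [derivative_add, derivative_X_pow, derivative_X, derivative_one, add_zero]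
      rw [Nat.cast_add, Nat.cast_mul, Nat.cast_two, CharTwo.two_eq_zero]
      simp
    refine ⟨1, X, ?_⟩
    rw [hderiv]
    linear_combination (X ^ (2 * k + 1) + X : R[X]) * (CharTwo.two_eq_zero : (2 : R[X]) = 0)

theorem trinomial_squarefree_general (n : ℕ) :
    Squarefree ((X : (ZMod 2)[X]) ^ n + X + 1) :=
  (separable_X_pow_add_X_add_one n).squarefree

theorem trinomial_squarefree (n : ℕ) (hn : 2 ≤ n) :
    Squarefree ((X : (ZMod 2)[X]) ^ n + X + 1) :=
  trinomial_squarefree_general n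
end

section
/- Let n be a positive integer coprime to a prime power q, and let d be the multiplicative order of q modulo n. Then the n-th cyclotomic polynomial, viewed over F_q, factors into φ(n)/d distinct irreducible polynomials, each of degree d. -/
/-!
A root of an irreducible factor of `Φ_n` over `F_q` is a primitive `n`-th root of unity `ζ`, and
the factor's degree is the order of the Frobenius `x ↦ x ^ q` acting on `F_q(ζ)`, i.e. the least
`d` with `ζ ^ (q ^ d) = ζ`, which is the order of `q` modulo `n`. Since `n` is invertible in `F_q`,
`Φ_n` is separable, so it is the product of its distinct monic irreducible factors, and comparing
degrees gives `φ(n) / d` of them.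
-/

open Polynomial UniqueFactorizationMonoid

theorem UniqueFactorizationMonoid.prod_toFinset_normalizedFactors_of_squarefree
    {α : Type*} [CommMonoidWithZero α] [Nontrivial α] [StrongNormalizationMonoid α]
    [UniqueFactorizationMonoid α] [DecidableEq α] {a : α} (ha : Squarefree a) :
    ∏ x ∈ (normalizedFactors a).toFinset, x = normalize a := by
  have hnodup := (squarefree_iff_nodup_normalizedFactors ha.ne_zero).mp ha
  rw [Finset.prod_eq_multiset_prod, Multiset.toFinset_val, hnodup.dedup, Multiset.map_id',
    prod_normalizedFactors_eq ha.ne_zero]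

theorem ZMod.orderOf_unitOfCoprime {n : ℕ} (a : ℕ) (h : a.Coprime n) :
    orderOf (ZMod.unitOfCoprime a h) = orderOf (a : ZMod n) := by
  rw [← orderOf_units, ZMod.coe_unitOfCoprime]

theorem cyclotomic_factorization_general (q n : ℕ) (F : Type) [Field F] [Fintype F]
    (hF : Fintype.card F = q)
    (hcop : n.Coprime q) (d : ℕ) (hd : d = orderOf (q : ZMod n)) :
    ∃ s : Finset (Polynomial F),
      s.card = n.totient / d ∧
      (∀ g ∈ s, Irreducible g ∧ g.natDegree = d) ∧
      Polynomial.cyclotomic n F = ∏ g ∈ s, g := by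
  classical
  obtain ⟨p, hchar⟩ := CharP.exists F
  have hp : Fact p.Prime := ⟨CharP.char_is_prime F p⟩
  obtain ⟨f, -, hcard⟩ := FiniteField.card F p
  rw [hcard] at hF
  subst hF hd
  have hpn : p.Coprime n := (hcop.coprime_dvd_right (dvd_pow_self p f.ne_zero)).symm
  have : NeZero (n : F) := NeZero.of_not_dvd F (hp.out.coprime_iff_not_dvd.mp hpn)
  rw [← ZMod.orderOf_unitOfCoprime _ (hpn.pow_left f)]
  refine ⟨(normalizedFactors (cyclotomic n F)).toFinset,
    normalizedFactors_cyclotomic_card hcard hpn, fun g hg => ?_, ?_⟩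
  · rw [Multiset.mem_toFinset] at hg
    exact ⟨irreducible_of_normalized_factor g hg,
      natDegree_of_mem_normalizedFactors_cyclotomic hcard hpn hg⟩
  · rw [prod_toFinset_normalizedFactors_of_squarefree (squarefree_cyclotomic n F),
      (cyclotomic.monic n F).normalize_eq_self]

theorem cyclotomic_factorization (q n : ℕ) (F : Type) [Field F] [Fintype F]
    (hF : Fintype.card F = q)
    (hq : ∃ r k : ℕ, r.Prime ∧ 0 < k ∧ q = r ^ k)
    (hn : 0 < n) (hcop : n.Coprime q) (d : ℕ) (hd : d = orderOf (q : ZMod n)) :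
    ∃ s : Finset (Polynomial F),
      s.card = n.totient / d ∧
      (∀ g ∈ s, Irreducible g ∧ g.natDegree = d) ∧
      Polynomial.cyclotomic n F = ∏ g ∈ s, g :=
  cyclotomic_factorization_general q n F hF hcop d hd
end

section
/- Let A be an invertible F_2-linear map on (F_2)^d and let Q be the measure with Q(0)=1/2, Q(e_i)=1/(2d). Let Q_n be the distribution after n steps of the chain X_n = AX_{n−1}+ε_n (X_0=0, ε_n i.i.d. ∼ Q), and P_n the distribution after n steps of X_n = X_{n−1}+ε_n. Then 2^d Σ_α (Q_n(α)−U(α))^2 ≤ 2^d Σ_α (P_n(α)−U(α))^2, where U is uniform. -/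
open Finset Matrix

/-- The step distribution: `0` with probability `1/2`, each standard basis
vector with probability `1/(2d)`. -/
noncomputable def stepQ (d : ℕ) (α : Fin d → ZMod 2) : ℝ :=
  if α = 0 then 1 / 2 else if ∃ i, α = Pi.single i 1 then 1 / (2 * d) else 0

/-- Distribution after `n` steps of the chain `X₀ = 0`, `Xₙ = A Xₙ₋₁ + εₙ`,
with the `εₙ` i.i.d. with distribution `Q`. -/
noncomputable def chainDist (d : ℕ) (A : Matrix (Fin d) (Fin d) (ZMod 2))
    (Q : (Fin d → ZMod 2) → ℝ) : ℕ → (Fin d → ZMod 2) → ℝ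
  | 0 => fun α => if α = 0 then 1 else 0
  | n + 1 => fun α => ∑ γ : Fin d → ZMod 2, chainDist d A Q n γ * Q (α + A.mulVec γ)

/-!
Walsh–Fourier analysis on `(ZMod 2)^d` with the characters `α ↦ (-1)^(β ⬝ α)`. The transform of
the law of `Xₙ` at `β` is `∏_{j<n} Q̂(β Aʲ)`, and Parseval turns `2^d ∑ (Qₙ - U)²` into
`∑_β Q̂ₙ(β)² - 2 Q̂ₙ(0) + 1`, where `Q̂ₙ(0) = Q̂(0)ⁿ` does not involve `A`. By AM–GM,
`∏_{j<n} Q̂(β Aʲ)²` is at most the mean over `j` of `Q̂(β Aʲ)^(2n)`, and since `β ↦ β Aʲ` permutes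
`(ZMod 2)^d`, summing over `β` gives at most `∑_β Q̂(β)^(2n)`, the corresponding sum for `A = 1`.
-/

noncomputable def signChar : AddChar (ZMod 2) ℝ where
  toFun x := (-1) ^ x.val
  map_zero_eq_one' := by simp
  map_add_eq_mul' x y := by rw [← pow_add, ZMod.val_add, ← neg_one_pow_eq_pow_mod_two]

@[simp] lemma signChar_one : signChar 1 = -1 := by
  simp [signChar, show (1 : ZMod 2).val = 1 from rfl]

section Walsh

variable {d : ℕ}

noncomputable def walshTransform (P : (Fin d → ZMod 2) → ℝ) (β : Fin d → ZMod 2) : ℝ :=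
  ∑ α, P α * signChar (β ⬝ᵥ α)

lemma walshTransform_zero (P : (Fin d → ZMod 2) → ℝ) : walshTransform P 0 = ∑ α, P α := by
  simp [walshTransform]

lemma sum_signChar_dotProduct (γ : Fin d → ZMod 2) :
    ∑ β : Fin d → ZMod 2, signChar (β ⬝ᵥ γ) = if γ = 0 then 2 ^ d else 0 := by
  split_ifs with hγ
  · simp [hγ]
  obtain ⟨i, hi⟩ := Function.ne_iff.mp hγ
  have hγi : γ i = 1 := (by decide : ∀ x : ZMod 2, x ≠ 0 → x = 1) _ hi
  -- translating by `eᵢ` flips the sign of every term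
  have hflip := Equiv.sum_comp (Equiv.addRight (Pi.single i 1)) fun β => signChar (β ⬝ᵥ γ)
  simp only [Equiv.coe_addRight, add_dotProduct, AddChar.map_add_eq_mul, single_dotProduct, hγi,
    one_mul, signChar_one, mul_neg_one, sum_neg_distrib] at hflip
  linarith

lemma sum_walshTransform_sq (P : (Fin d → ZMod 2) → ℝ) :
    ∑ β, walshTransform P β ^ 2 = 2 ^ d * ∑ α, P α ^ 2 := by
  have hpair (α α' : Fin d → ZMod 2) : α + α' = 0 ↔ α' = α := by
    rw [add_eq_zero_iff_neg_eq, show -α = α from funext fun i => ZMod.neg_eq_self_mod_two (α i),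
      eq_comm]
  calc ∑ β, walshTransform P β ^ 2
      = ∑ α, ∑ α', ∑ β : Fin d → ZMod 2,
          P α * signChar (β ⬝ᵥ α) * (P α' * signChar (β ⬝ᵥ α')) := by
        simp_rw [walshTransform, sq, sum_mul_sum]
        rw [sum_comm]
        exact sum_congr rfl fun _ _ => sum_comm
    _ = ∑ α, ∑ α', P α * P α' * ∑ β : Fin d → ZMod 2, signChar (β ⬝ᵥ (α + α')) := by
        simp only [dotProduct_add, AddChar.map_add_eq_mul, mul_sum]
        exact sum_congr rfl fun _ _ => sum_congr rfl fun _ _ => sum_congr rfl fun _ _ => by ring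
    _ = 2 ^ d * ∑ α, P α ^ 2 := by
        simp only [sum_signChar_dotProduct, hpair, mul_ite, mul_zero, sum_ite_eq', mem_univ,
          if_true, mul_sum]
        exact sum_congr rfl fun α _ => by ring

lemma two_pow_mul_sum_sub_sq_eq (P : (Fin d → ZMod 2) → ℝ) :
    2 ^ d * ∑ α, (P α - 1 / 2 ^ d) ^ 2 =
      ∑ β, walshTransform P β ^ 2 - 2 * walshTransform P 0 + 1 := by
  rw [sum_walshTransform_sq, walshTransform_zero]
  simp only [sub_sq, sum_add_distrib, sum_sub_distrib, ← sum_mul, ← mul_sum, sum_const, card_univ,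
    Fintype.card_fun, ZMod.card, Fintype.card_fin, nsmul_eq_mul, Nat.cast_pow, Nat.cast_ofNat]
  field_simp

end Walsh

section Chain

variable {d : ℕ} (A : Matrix (Fin d) (Fin d) (ZMod 2)) (Q : (Fin d → ZMod 2) → ℝ)

lemma walshTransform_chainDist_succ (n : ℕ) (β : Fin d → ZMod 2) :
    walshTransform (chainDist d A Q (n + 1)) β =
      walshTransform Q β * walshTransform (chainDist d A Q n) (β ᵥ* A) := by
  have hcancel (α c : Fin d → ZMod 2) : α + c + c = α := by
    rw [add_assoc, show c + c = 0 from funext fun i => CharTwo.add_self_eq_zero (c i), add_zero]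
  calc walshTransform (chainDist d A Q (n + 1)) β
      = ∑ γ, ∑ α, chainDist d A Q n γ * Q (α + A *ᵥ γ) * signChar (β ⬝ᵥ α) := by
        simp only [walshTransform, chainDist, sum_mul]
        exact sum_comm
    _ = ∑ γ, ∑ δ, chainDist d A Q n γ * Q δ * signChar (β ⬝ᵥ (δ + A *ᵥ γ)) := by
        refine sum_congr rfl fun γ _ => ?_
        rw [← Equiv.sum_comp (Equiv.addRight (A *ᵥ γ))]
        simp only [Equiv.coe_addRight, hcancel]
    _ = ∑ γ, chainDist d A Q n γ * signChar ((β ᵥ* A) ⬝ᵥ γ) * walshTransform Q β := by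
        simp only [dotProduct_add, AddChar.map_add_eq_mul, dotProduct_mulVec, walshTransform,
          mul_sum]
        exact sum_congr rfl fun _ _ => sum_congr rfl fun _ _ => by ring
    _ = walshTransform Q β * walshTransform (chainDist d A Q n) (β ᵥ* A) := by
        rw [← sum_mul, mul_comm]
        rfl

lemma walshTransform_chainDist (n : ℕ) (β : Fin d → ZMod 2) :
    walshTransform (chainDist d A Q n) β = ∏ j ∈ range n, walshTransform Q ((· ᵥ* A)^[j] β) := by
  induction n generalizing β with
  | zero => simp [walshTransform, chainDist]
  | succ n ih =>
    rw [walshTransform_chainDist_succ, ih, prod_range_succ', Function.iterate_zero_apply, mul_comm]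
    simp only [Function.iterate_succ_apply]

lemma walshTransform_chainDist_zero (n : ℕ) :
    walshTransform (chainDist d A Q n) 0 = walshTransform Q 0 ^ n := by
  simp [walshTransform_chainDist, Function.iterate_fixed (f := (· ᵥ* A)) (zero_vecMul A)]

lemma walshTransform_chainDist_one (n : ℕ) (β : Fin d → ZMod 2) :
    walshTransform (chainDist d 1 Q n) β = walshTransform Q β ^ n := by
  rw [walshTransform_chainDist]
  simp only [Function.iterate_fixed (f := (· ᵥ* 1)) (vecMul_one β), prod_const, card_range]

end Chain

lemma Real.prod_le_sum_pow_card_div_card {ι : Type*} {s : Finset ι} (hs : s.Nonempty)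
    {x : ι → ℝ} (hx : ∀ i ∈ s, 0 ≤ x i) : ∏ i ∈ s, x i ≤ (∑ i ∈ s, x i ^ #s) / #s := by
  have hcard : #s ≠ 0 := hs.card_pos.ne'
  have := Real.geom_mean_le_arith_mean_weighted s (fun _ => (#s : ℝ)⁻¹) (fun i => x i ^ #s)
    (fun _ _ => by positivity) (by simp [hcard]) fun i hi => pow_nonneg (hx i hi) _
  rw [prod_congr rfl fun i hi => Real.pow_rpow_inv_natCast (hx i hi) hcard] at this
  rwa [div_eq_inv_mul, mul_sum]

lemma sum_prod_iterate_le_sum_pow {α : Type*} [Fintype α] {f : α → α} (hf : f.Bijective)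
    {h : α → ℝ} (h0 : ∀ x, 0 ≤ h x) (n : ℕ) :
    ∑ x, ∏ j ∈ range n, h (f^[j] x) ≤ ∑ x, h x ^ n := by
  rcases n.eq_zero_or_pos with rfl | hn
  · simp
  calc ∑ x, ∏ j ∈ range n, h (f^[j] x)
      ≤ ∑ x, (∑ j ∈ range n, h (f^[j] x) ^ n) / n := sum_le_sum fun x _ => by
        simpa using Real.prod_le_sum_pow_card_div_card (nonempty_range_iff.mpr hn.ne')
          fun j _ => h0 (f^[j] x)
    _ = (∑ j ∈ range n, ∑ x, h (f^[j] x) ^ n) / n := by rw [← sum_div, sum_comm]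
    _ = ∑ x, h x ^ n := by
        simp only [fun j => (hf.iterate j).sum_comp fun x => h x ^ n, sum_const, card_range,
          nsmul_eq_mul]
        field_simp

theorem perm_mixes_no_slower_general (d : ℕ)
    (A : Matrix (Fin d) (Fin d) (ZMod 2)) (hA : IsUnit A) (n : ℕ) :
    2 ^ d * ∑ α, (chainDist d A (stepQ d) n α - 1 / 2 ^ d) ^ 2 ≤
      2 ^ d * ∑ α, (chainDist d (1 : Matrix (Fin d) (Fin d) (ZMod 2)) (stepQ d) n α
        - 1 / 2 ^ d) ^ 2 := by
  have hbij : Function.Bijective (· ᵥ* A) :=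
    ⟨vecMul_injective_iff_isUnit.mpr hA, vecMul_surjective_iff_isUnit.mpr hA⟩
  rw [two_pow_mul_sum_sub_sq_eq, two_pow_mul_sum_sub_sq_eq, walshTransform_chainDist_zero,
    walshTransform_chainDist_zero]
  gcongr ?_ - _ + _
  simpa only [walshTransform_chainDist_one, walshTransform_chainDist A, ← prod_pow, pow_right_comm]
    using sum_prod_iterate_le_sum_pow hbij (fun β => sq_nonneg (walshTransform (stepQ d) β)) n

theorem perm_mixes_no_slower (d : ℕ) (hd : 0 < d)
    (A : Matrix (Fin d) (Fin d) (ZMod 2)) (hA : IsUnit A) (n : ℕ) :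
    2 ^ d * ∑ α, (chainDist d A (stepQ d) n α - 1 / 2 ^ d) ^ 2 ≤
      2 ^ d * ∑ α, (chainDist d (1 : Matrix (Fin d) (Fin d) (ZMod 2)) (stepQ d) n α
        - 1 / 2 ^ d) ^ 2 :=
  perm_mixes_no_slower_general d A hA n
end

section
/- Let p be prime with 1+x+⋯+x^{p−1} irreducible over F_2, let d = p−1, and represent F_{2^d} = F_2[x]/(1+x+⋯+x^{d}). Then for 1 ≤ j ≤ d−1, the matrix A^j of the map y ↦ y^{2^j} with respect to the basis 1, x, ..., x^{d−1} is a permutation matrix in which the column with index j* ≡ (p−1)/2^j (mod p) (indices starting at 0) is replaced by the all-ones column. -/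
open Polynomial Finset

/-!
Since `1 + x + ⋯ + x^(p-1) = 0`, multiplying by `x - 1` gives `x ^ p = 1`, so
`(x^k)^(2^j) = x^(2^j k mod p)`. Every power `x^r` with `r ≤ p - 2` is a basis vector, and the
single remaining power `x^(p-1) = -(1 + x + ⋯ + x^(p-2))` is the all-ones vector in
characteristic 2; here `1, x, …, x^(p-2)` is a basis because `1 + x + ⋯ + x^(p-1)` is monic of
degree `p - 1`.
-/

theorem natDegree_geom_sum_X {R : Type*} [Semiring R] [Nontrivial R] {n : ℕ} (hn : n ≠ 0) :
    (∑ i ∈ range n, (X : R[X]) ^ i).natDegree = n - 1 := by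
  obtain ⟨m, rfl⟩ : ∃ m, n = m + 1 := ⟨n - 1, by omega⟩
  rw [sum_range_succ, natDegree_add_eq_right_of_degree_lt, natDegree_X_pow, Nat.add_sub_cancel]
  rw [degree_X_pow]
  exact (degree_sum_le _ _).trans_lt <| (Finset.sup_lt_iff (WithBot.bot_lt_coe m)).2
    fun i hi => by rw [degree_X_pow]; exact WithBot.coe_lt_coe.2 (mem_range.1 hi)

section GeomSumRoot

variable {R : Type*} [CommRing R] {α : R} {p : ℕ}

theorem pow_eq_one_of_geom_sum_eq_zero (h : ∑ i ∈ range p, α ^ i = 0) : α ^ p = 1 :=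
  sub_eq_zero.1 <| by rw [← geom_sum_mul, h, zero_mul]

theorem pow_pred_eq_neg_geom_sum (hp : p ≠ 0) (h : ∑ i ∈ range p, α ^ i = 0) :
    α ^ (p - 1) = -∑ i ∈ range (p - 1), α ^ i := by
  rw [← Nat.succ_pred_eq_of_ne_zero hp, sum_range_succ] at h
  exact eq_neg_of_add_eq_zero_right h

end GeomSumRoot

theorem neg_eq_self_of_zmod_two {M : Type*} [AddCommGroup M] [Module (ZMod 2) M] (x : M) :
    -x = x :=
  neg_eq_iff_add_eq_zero.2 <| by rw [← two_smul (ZMod 2), show (2 : ZMod 2) = 0 from rfl, zero_smul]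

def rootPowCoord (p r : ℕ) (i : Fin (p - 1)) : ZMod 2 :=
  if r = p - 1 then 1 else if r = i then 1 else 0

theorem sum_rootPowCoord_smul {R : Type*} [CommRing R] [Module (ZMod 2) R] {α : R} {p r : ℕ}
    (h : ∑ i ∈ range p, α ^ i = 0) (hr : r < p) :
    ∑ i : Fin (p - 1), rootPowCoord p r i • α ^ (i : ℕ) = α ^ r := by
  by_cases hlast : r = p - 1
  · simp only [rootPowCoord, if_pos hlast, one_smul]
    rw [Fin.sum_univ_eq_sum_range (α ^ ·), hlast, pow_pred_eq_neg_geom_sum (by omega) h,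
      neg_eq_self_of_zmod_two]
  · have hr' : r < p - 1 := by omega
    simp only [rootPowCoord, if_neg hlast, ite_smul, one_smul, zero_smul]
    rw [Finset.sum_eq_single ⟨r, hr'⟩ (fun i _ hi => if_neg fun h => hi (Fin.ext h.symm))
      (fun h => absurd (mem_univ _) h), if_pos rfl]

theorem squaring_matrix_structure_general (p : ℕ)
    (f : (ZMod 2)[X]) (hf : f = ∑ i ∈ Finset.range p, X ^ i)
    (j : ℕ)
    (M : Matrix (Fin (p - 1)) (Fin (p - 1)) (ZMod 2))
    -- `M` is the matrix of `y ↦ y^(2^j)` in the basis `1, x, ..., x^(d-1)`: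
    -- the `k`-th column gives the coordinates of `(x^k)^(2^j)`.
    (hM : ∀ k : Fin (p - 1),
      ((AdjoinRoot.root f) ^ (k : ℕ)) ^ (2 ^ j) =
        ∑ i : Fin (p - 1), M i k • (AdjoinRoot.root f) ^ (i : ℕ)) :
    ∀ i k : Fin (p - 1),
      M i k =
        if (2 ^ j * (k : ℕ)) % p = p - 1 then 1
        else if (2 ^ j * (k : ℕ)) % p = (i : ℕ) then 1 else 0 := by
  intro i k
  have hp : p ≠ 0 := by have := i.is_lt; omega
  have hroot : ∑ i ∈ range p, AdjoinRoot.root f ^ i = 0 := by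
    subst hf
    simpa [eval₂_finsetSum] using AdjoinRoot.eval₂_root (∑ i ∈ range p, (X : (ZMod 2)[X]) ^ i)
  have hmonic : f.Monic := hf ▸ monic_geom_sum_X hp
  have hdeg : f.natDegree = p - 1 := hf ▸ natDegree_geom_sum_X hp
  let b := (AdjoinRoot.powerBasis' hmonic).basis.reindex (finCongr hdeg)
  have hb : ∀ i, b i = AdjoinRoot.root f ^ (i : ℕ) := fun _ => by simp [b]; rfl
  have hcol : ∑ i, M i k • b i = ∑ i, rootPowCoord p (2 ^ j * k % p) i • b i := by
    simp only [hb]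
    rw [← hM k, sum_rootPowCoord_smul hroot (Nat.mod_lt _ (by omega)), ← pow_mul, mul_comm,
      ← pow_eq_pow_mod _ (pow_eq_one_of_geom_sum_eq_zero hroot)]
  simpa only [b.repr_sum_self, rootPowCoord] using congrArg (fun y => b.repr y i) hcol

theorem squaring_matrix_structure (p : ℕ) (hp : p.Prime)
    (f : (ZMod 2)[X]) (hf : f = ∑ i ∈ Finset.range p, X ^ i)
    (hirr : Irreducible f)
    (j : ℕ) (hj1 : 1 ≤ j) (hj2 : j ≤ p - 2)
    (M : Matrix (Fin (p - 1)) (Fin (p - 1)) (ZMod 2))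
    -- `M` is the matrix of `y ↦ y^(2^j)` in the basis `1, x, ..., x^(d-1)`:
    -- the `k`-th column gives the coordinates of `(x^k)^(2^j)`.
    (hM : ∀ k : Fin (p - 1),
      ((AdjoinRoot.root f) ^ (k : ℕ)) ^ (2 ^ j) =
        ∑ i : Fin (p - 1), M i k • (AdjoinRoot.root f) ^ (i : ℕ)) :
    ∀ i k : Fin (p - 1),
      M i k =
        if (2 ^ j * (k : ℕ)) % p = p - 1 then 1
        else if (2 ^ j * (k : ℕ)) % p = (i : ℕ) then 1 else 0 :=
  squaring_matrix_structure_general p f hf j M hM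
end
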